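/- Let p be a prime and n ≥ 1. Then H = ⟨η_0,…,η_{n−1}⟩ is isomorphic to the direct product of n copies of the cyclic group C_{p−1}, H normalizes P_n, and H is a Hall p'-subgroup of N_{Sym(F_p^n)}(P_n). -/

import Mathlib

variable (p n : ℕ)

/-- The underlying function of the generator `σ_i`. -/
def sigmaFun (i : Fin n) (lam : Fin n → ZMod p) : Fin n → ZMod p :=
  fun k => if k = i ∧ ∀ j : Fin n, j < i → lam j = 0 then lam k + 1 else lam k

lemma sigmaFun_apply_ne (i : Fin n) (lam : Fin n → ZMod p) {k : Fin n} (h : k ≠ i) :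
    sigmaFun p n i lam k = lam k := by
  simp [sigmaFun, h]

/-- The inverse function of `σ_i`. -/
def sigmaInvFun (i : Fin n) (lam : Fin n → ZMod p) : Fin n → ZMod p :=
  fun k => if k = i ∧ ∀ j : Fin n, j < i → lam j = 0 then lam k - 1 else lam k

lemma sigmaInvFun_apply_ne (i : Fin n) (lam : Fin n → ZMod p) {k : Fin n} (h : k ≠ i) :
    sigmaInvFun p n i lam k = lam k := by
  simp [sigmaInvFun, h]

lemma sigmaFun_cond (i : Fin n) (lam : Fin n → ZMod p) :
    (∀ j : Fin n, j < i → sigmaFun p n i lam j = 0) ↔ (∀ j : Fin n, j < i → lam j = 0) := by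
  constructor
  · intro h j hj
    have := h j hj
    rwa [sigmaFun_apply_ne p n i lam (ne_of_lt hj)] at this
  · intro h j hj
    rw [sigmaFun_apply_ne p n i lam (ne_of_lt hj)]
    exact h j hj

lemma sigmaInvFun_cond (i : Fin n) (lam : Fin n → ZMod p) :
    (∀ j : Fin n, j < i → sigmaInvFun p n i lam j = 0) ↔ (∀ j : Fin n, j < i → lam j = 0) := by
  constructor
  · intro h j hj
    have := h j hj
    rwa [sigmaInvFun_apply_ne p n i lam (ne_of_lt hj)] at this
  · intro h j hj
    rw [sigmaInvFun_apply_ne p n i lam (ne_of_lt hj)]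
    exact h j hj

/-- The generator `σ_i` of the Sylow `p`-subgroup of `Sym(F_p^n)`: it fixes
`(λ_0, …, λ_{n-1})` if `λ_j ≠ 0` for some `j < i`, and otherwise replaces the entry
`λ_i` by `λ_i + 1`. -/
def sigmaPerm (i : Fin n) : Equiv.Perm (Fin n → ZMod p) where
  toFun := sigmaFun p n i
  invFun := sigmaInvFun p n i
  left_inv := by
    intro lam
    funext k
    by_cases hk : k = i
    · subst hk
      show sigmaInvFun p n k (sigmaFun p n k lam) k = lam k
      by_cases hc : ∀ j : Fin n, j < k → lam j = 0
      · have hC : ∀ j : Fin n, j < k → sigmaFun p n k lam j = 0 :=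
          (sigmaFun_cond p n k lam).mpr hc
        unfold sigmaInvFun
        rw [if_pos ⟨rfl, hC⟩]
        unfold sigmaFun
        rw [if_pos ⟨rfl, hc⟩]
        ring
      · have hC : ¬ ∀ j : Fin n, j < k → sigmaFun p n k lam j = 0 :=
          fun h => hc ((sigmaFun_cond p n k lam).mp h)
        unfold sigmaInvFun
        rw [if_neg (by tauto)]
        unfold sigmaFun
        rw [if_neg (by tauto)]
    · exact (sigmaInvFun_apply_ne p n i _ hk).trans (sigmaFun_apply_ne p n i lam hk)
  right_inv := by
    intro lam
    funext k
    by_cases hk : k = i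
    · subst hk
      show sigmaFun p n k (sigmaInvFun p n k lam) k = lam k
      by_cases hc : ∀ j : Fin n, j < k → lam j = 0
      · have hC : ∀ j : Fin n, j < k → sigmaInvFun p n k lam j = 0 :=
          (sigmaInvFun_cond p n k lam).mpr hc
        unfold sigmaFun
        rw [if_pos ⟨rfl, hC⟩]
        unfold sigmaInvFun
        rw [if_pos ⟨rfl, hc⟩]
        ring
      · have hC : ¬ ∀ j : Fin n, j < k → sigmaInvFun p n k lam j = 0 :=
          fun h => hc ((sigmaInvFun_cond p n k lam).mp h)
        unfold sigmaFun
        rw [if_neg (by tauto)]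
        unfold sigmaInvFun
        rw [if_neg (by tauto)]
    · exact (sigmaFun_apply_ne p n i _ hk).trans (sigmaInvFun_apply_ne p n i lam hk)

/-- `P_n = ⟨σ_0, …, σ_{n-1}⟩`, a Sylow `p`-subgroup of `Sym(F_p^n)`. -/
def PSyl : Subgroup (Equiv.Perm (Fin n → ZMod p)) :=
  Subgroup.closure (Set.range (sigmaPerm p n))


/-- The permutation `η_i` of `F_p^n` multiplying the `i`-th coordinate by the unit `r`. -/
def etaPerm (r : (ZMod p)ˣ) (i : Fin n) : Equiv.Perm (Fin n → ZMod p) where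
  toFun lam := fun k => if k = i then (r : ZMod p) * lam k else lam k
  invFun lam := fun k => if k = i then ((r⁻¹ : (ZMod p)ˣ) : ZMod p) * lam k else lam k
  left_inv := by
    intro lam
    funext k
    by_cases hk : k = i
    · subst hk
      simp only [if_pos rfl, ite_true, eq_self_iff_true, if_true, ← mul_assoc,
        ← Units.val_mul, inv_mul_cancel, Units.val_one, one_mul]
    · simp [hk]
  right_inv := by
    intro lam
    funext k
    by_cases hk : k = i
    · subst hk
      simp only [if_pos rfl, ite_true, eq_self_iff_true, if_true, ← mul_assoc,
        ← Units.val_mul, mul_inv_cancel, Units.val_one, one_mul]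
    · simp [hk]

/-!
Write `F_p^(n+1) = F_p^n × F_p`. The generators show that `P_(n+1) = P_n ≀ C_p`: its elements are
the maps `(μ, a) ↦ (g μ, a + f μ)` with `g ∈ P_n` and `f : F_p^n → F_p` arbitrary, so `|P_n|` is a
power of `p`. The fibres of the projection to `F_p^n` are determined by `P_(n+1)` alone (`y` lies in
the fibre of `x` iff every element of `P_(n+1)` fixing `x` fixes `y`), so an element `τ` of the
normaliser permutes them: it induces some `τ'` normalising `P_n` and acts on the fibre over `μ` by
a map `s_μ`. Conjugating translations by `τ` shows that all the `s_μ` are affine with one common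
slope `b ∈ F_p^×`. By induction `τ' ∈ P_n D_n`, where `D_n` is the group of diagonal scalings,
hence `τ ∈ P_(n+1) D_(n+1)`. Since `D_n` normalises `P_n` (it conjugates `σ_i` to a power of
`σ_i`), has order `(p - 1)^n` coprime to `|P_n|`, and equals `H` when `r` generates `F_p^×`, it is a
complement of `P_n` in the normaliser, of index `|P_n|`.
-/

open Equiv

theorem forall_fix_apply_iff_of_mem_normalizer {α : Type*} {P : Subgroup (Perm α)} {τ : Perm α}
    (hτ : τ ∈ Subgroup.normalizer (P : Set (Perm α))) (x y : α) :
    (∀ g ∈ P, g (τ x) = τ x → g (τ y) = τ y) ↔ ∀ g ∈ P, g x = x → g y = y := by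
  constructor
  · intro h g hg hx
    simpa using h (τ * g * τ⁻¹) ((Subgroup.mem_normalizer_iff.mp hτ g).mp hg) (by simp [hx])
  · intro h g hg hx
    simpa [Equiv.symm_apply_eq] using
      h (τ⁻¹ * g * τ) ((Subgroup.mem_normalizer_iff''.mp hτ g).mp hg) (by simp [hx])

theorem Subgroup.closure_range_mulSingle_eq_top {ι G : Type*} [Fintype ι] [DecidableEq ι]
    [CommGroup G] {r : G} (hr : ∀ s, s ∈ Subgroup.zpowers r) :
    Subgroup.closure (Set.range fun i : ι => Pi.mulSingle i r) = ⊤ := by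
  refine (Subgroup.eq_top_iff' _).mpr fun u => ?_
  rw [← Finset.univ_prod_mulSingle u]
  refine Subgroup.prod_mem _ fun i _ => ?_
  obtain ⟨k, hk⟩ := Subgroup.mem_zpowers_iff.mp (hr (u i))
  rw [← hk, Pi.mulSingle_zpow]
  exact zpow_mem (Subgroup.subset_closure (Set.mem_range_self i)) k

theorem ZMod.apply_eq_add_mul_of_apply_add_one {m : ℕ} [NeZero m] {f : ZMod m → ZMod m}
    {b : ZMod m} (h : ∀ x, f (x + 1) = f x + b) (x : ZMod m) : f x = f 0 + b * x := by
  have key : ∀ k : ℕ, f k = f 0 + b * k := by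
    intro k
    induction k with
    | zero => simp
    | succ k ih =>
      push_cast
      rw [h, ih]
      ring
  simpa using key x.val

section Wreath

variable {A : Type*} {n}

theorem Equiv.Perm.ext_snoc {f g : Perm (Fin (n + 1) → A)}
    (h : ∀ μ a, f (Fin.snoc μ a) = g (Fin.snoc μ a)) : f = g :=
  Equiv.ext fun x => by simpa only [Fin.snoc_init_self] using h (Fin.init x) (x (Fin.last n))

variable [Zero A] in
theorem exists_perm_snoc_of_init_apply_iff {τ : Perm (Fin (n + 1) → A)}
    (h : ∀ x y, Fin.init (τ x) = Fin.init (τ y) ↔ Fin.init x = Fin.init y) :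
    ∃ (τ' : Perm (Fin n → A)) (s : (Fin n → A) → A → A),
      ∀ μ a, τ (Fin.snoc μ a) = Fin.snoc (τ' μ) (s μ a) := by
  set t : (Fin n → A) → Fin n → A := fun μ => Fin.init (τ (Fin.snoc μ 0))
  have ht : ∀ x, Fin.init (τ x) = t (Fin.init x) := fun x => (h _ _).mpr (by simp)
  have hbij : Function.Bijective t := by
    refine ⟨fun μ ν hμν => ?_, fun ν => ⟨Fin.init (τ.symm (Fin.snoc ν 0)), ?_⟩⟩
    · simpa using (h (Fin.snoc μ 0) (Fin.snoc ν 0)).mp hμν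
    · rw [← ht]
      simp
  refine ⟨Equiv.ofBijective t hbij, fun μ a => τ (Fin.snoc μ a) (Fin.last n), fun μ a => ?_⟩
  conv_lhs => rw [← Fin.snoc_init_self (τ (Fin.snoc μ a)), ht, Fin.init_snoc]
  rfl

variable [AddGroup A]

def wreathPerm (g : Perm (Fin n → A)) (f : (Fin n → A) → A) : Perm (Fin (n + 1) → A) where
  toFun x := Fin.snoc (g (Fin.init x)) (x (Fin.last n) + f (Fin.init x))
  invFun x := Fin.snoc (g⁻¹ (Fin.init x)) (x (Fin.last n) - f (g⁻¹ (Fin.init x)))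
  left_inv x := by simp [Fin.snoc_init_self]
  right_inv x := by simp [Fin.snoc_init_self]

@[simp]
theorem wreathPerm_snoc (g : Perm (Fin n → A)) (f : (Fin n → A) → A) (μ : Fin n → A) (a : A) :
    wreathPerm g f (Fin.snoc μ a) = Fin.snoc (g μ) (a + f μ) := by
  simp [wreathPerm]

theorem wreathPerm_one_zero : wreathPerm (1 : Perm (Fin n → A)) 0 = 1 :=
  Perm.ext_snoc fun μ a => by simp

theorem wreathPerm_mul (g g' : Perm (Fin n → A)) (f f' : (Fin n → A) → A) :
    wreathPerm g f * wreathPerm g' f' = wreathPerm (g * g') (f' + f ∘ g') :=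
  Perm.ext_snoc fun μ a => by simp [add_assoc]

theorem wreathPerm_inv (g : Perm (Fin n → A)) (f : (Fin n → A) → A) :
    (wreathPerm g f)⁻¹ = wreathPerm g⁻¹ (fun μ => -f (g⁻¹ μ)) := by
  rw [inv_eq_iff_mul_eq_one, wreathPerm_mul, mul_inv_cancel]
  convert wreathPerm_one_zero
  ext μ
  simp

theorem wreathPerm_inj {g g' : Perm (Fin n → A)} {f f' : (Fin n → A) → A} :
    wreathPerm g f = wreathPerm g' f' ↔ g = g' ∧ f = f' := by
  refine ⟨fun h => ⟨Equiv.ext fun μ => ?_, funext fun μ => ?_⟩, fun h => h.1 ▸ h.2 ▸ rfl⟩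
  · simpa using congr_arg Fin.init (Perm.ext_iff.mp h (Fin.snoc μ 0))
  · simpa using congr_fun (Perm.ext_iff.mp h (Fin.snoc μ 0)) (Fin.last n)

theorem wreathPerm_eq_wreathPerm_zero_mul (g : Perm (Fin n → A)) (f : (Fin n → A) → A) :
    wreathPerm g f = wreathPerm g 0 * wreathPerm 1 f := by
  simp [wreathPerm_mul]

def wreathSubgroup (K : Subgroup (Perm (Fin n → A))) : Subgroup (Perm (Fin (n + 1) → A)) where
  carrier := {x | ∃ g ∈ K, ∃ f, wreathPerm g f = x}
  one_mem' := ⟨1, K.one_mem, 0, wreathPerm_one_zero⟩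
  mul_mem' := by
    rintro _ _ ⟨g, hg, f, rfl⟩ ⟨g', hg', f', rfl⟩
    exact ⟨g * g', K.mul_mem hg hg', _, (wreathPerm_mul g g' f f').symm⟩
  inv_mem' := by
    rintro _ ⟨g, hg, f, rfl⟩
    exact ⟨g⁻¹, K.inv_mem hg, _, (wreathPerm_inv g f).symm⟩

theorem mem_wreathSubgroup {K : Subgroup (Perm (Fin n → A))} {x : Perm (Fin (n + 1) → A)} :
    x ∈ wreathSubgroup K ↔ ∃ g ∈ K, ∃ f, wreathPerm g f = x :=
  Iff.rfl

theorem card_wreathSubgroup (K : Subgroup (Perm (Fin n → A))) :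
    Nat.card (wreathSubgroup K) = Nat.card K * Nat.card ((Fin n → A) → A) := by
  rw [← Nat.card_prod]
  refine Nat.card_congr (Equiv.ofBijective (fun x => ⟨wreathPerm x.1 x.2, x.1, x.1.2, x.2, rfl⟩)
    ⟨fun x y h => ?_, fun ⟨_, g, hg, f, hgf⟩ => ⟨(⟨g, hg⟩, f), Subtype.ext hgf⟩⟩).symm
  obtain ⟨hg, hf⟩ := wreathPerm_inj.mp (congr_arg Subtype.val h)
  exact Prod.ext (Subtype.ext hg) hf

end Wreath

section Translation

variable {A : Type*} [AddCommGroup A] {n}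

def translationPerm : Multiplicative ((Fin n → A) → A) →* Perm (Fin (n + 1) → A) where
  toFun f := wreathPerm 1 f.toAdd
  map_one' := wreathPerm_one_zero
  map_mul' f f' := by simp [wreathPerm_mul, add_comm]

theorem translationPerm_ofAdd (f : (Fin n → A) → A) :
    translationPerm (Multiplicative.ofAdd f) = wreathPerm 1 f :=
  rfl

end Translation

section Sylow

variable {p n}

theorem sigmaPerm_apply (i : Fin n) (x : Fin n → ZMod p) (k : Fin n) :
    sigmaPerm p n i x k = if k = i ∧ ∀ j < i, x j = 0 then x k + 1 else x k :=
  rfl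

theorem sigmaPerm_castSucc (i : Fin n) :
    sigmaPerm p (n + 1) i.castSucc = wreathPerm (sigmaPerm p n i) 0 := by
  refine Perm.ext_snoc fun μ a => funext fun k => ?_
  have hcond : (∀ j : Fin (n + 1), j < i.castSucc → (Fin.snoc μ a : Fin (n + 1) → ZMod p) j = 0) ↔
      ∀ j < i, μ j = 0 := by
    simp [Fin.forall_fin_succ', (Fin.castSucc_lt_last i).not_gt]
  cases k using Fin.lastCases with
  | last => simp [sigmaPerm_apply, (Fin.castSucc_lt_last i).ne']
  | cast k => simp [sigmaPerm_apply, hcond]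

theorem sigmaPerm_last :
    sigmaPerm p (n + 1) (Fin.last n) = wreathPerm 1 (Pi.single 0 1) := by
  refine Perm.ext_snoc fun μ a => funext fun k => ?_
  have hcond : (∀ j : Fin (n + 1), j < Fin.last n → (Fin.snoc μ a : Fin (n + 1) → ZMod p) j = 0) ↔
      μ = 0 := by
    simp [Fin.forall_fin_succ', funext_iff, Fin.castSucc_lt_last]
  cases k using Fin.lastCases with
  | last =>
    simp only [sigmaPerm_apply, hcond]
    split_ifs <;> simp_all
  | cast k => simp [sigmaPerm_apply, (Fin.castSucc_lt_last k).ne]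

theorem sigmaPerm_pow_apply (i : Fin n) (m : ℕ) (x : Fin n → ZMod p) :
    (sigmaPerm p n i ^ m) x =
      fun k => if k = i ∧ ∀ j < i, x j = 0 then x k + m else x k := by
  induction m with
  | zero => simp
  | succ m ih =>
    have hcond : (∀ j < i, (sigmaPerm p n i ^ m) x j = 0) ↔ ∀ j < i, x j = 0 := by
      simp +contextual [ih, ne_of_lt]
    rw [pow_succ', Perm.mul_apply]
    funext k
    simp only [sigmaPerm_apply, hcond]
    rw [ih]
    split_ifs <;> simp_all [add_assoc]

theorem sigmaPerm_mem_PSyl (i : Fin n) : sigmaPerm p n i ∈ PSyl p n :=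
  Subgroup.subset_closure ⟨i, rfl⟩

theorem wreathPerm_zero_mem_PSyl {g : Perm (Fin n → ZMod p)} (hg : g ∈ PSyl p n) :
    wreathPerm g 0 ∈ PSyl p (n + 1) := by
  let lift : Perm (Fin n → ZMod p) →* Perm (Fin (n + 1) → ZMod p) :=
    MonoidHom.mk' (wreathPerm · 0) fun g g' => by simp [wreathPerm_mul]
  have : PSyl p n ≤ (PSyl p (n + 1)).comap lift :=
    (Subgroup.closure_le _).mpr <| Set.range_subset_iff.mpr fun i => by
      simpa [lift, ← sigmaPerm_castSucc] using sigmaPerm_mem_PSyl i.castSucc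
  exact this hg

variable [NeZero p]

theorem wreathPerm_one_single_zero_mem_PSyl (a : ZMod p) :
    wreathPerm 1 (Pi.single (0 : Fin n → ZMod p) a) ∈ PSyl p (n + 1) := by
  have : Multiplicative.ofAdd (Pi.single 0 a : (Fin n → ZMod p) → ZMod p) =
      Multiplicative.ofAdd (Pi.single 0 1) ^ a.val := by
    rw [← ofAdd_nsmul, ← Pi.single_smul, nsmul_one, ZMod.natCast_zmod_val]
  rw [← translationPerm_ofAdd, this, map_pow, translationPerm_ofAdd, ← sigmaPerm_last]
  exact pow_mem (sigmaPerm_mem_PSyl _) _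

theorem exists_mem_PSyl_apply_zero (c : Fin n → ZMod p) : ∃ g ∈ PSyl p n, g 0 = c := by
  induction n with
  | zero => exact ⟨1, one_mem _, Subsingleton.elim _ _⟩
  | succ n ih =>
    obtain ⟨g, hg, hg0⟩ := ih (Fin.init c)
    refine ⟨wreathPerm g 0 * wreathPerm 1 (Pi.single 0 (c (Fin.last n))),
      mul_mem (wreathPerm_zero_mem_PSyl hg) (wreathPerm_one_single_zero_mem_PSyl _), ?_⟩
    have h0 : (0 : Fin (n + 1) → ZMod p) = Fin.snoc 0 0 := by
      ext k
      cases k using Fin.lastCases <;> simp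
    rw [h0, Perm.mul_apply, wreathPerm_snoc, wreathPerm_snoc]
    simp [hg0]

theorem wreathPerm_one_mem_PSyl (f : (Fin n → ZMod p) → ZMod p) :
    wreathPerm 1 f ∈ PSyl p (n + 1) := by
  have hsingle : ∀ μ a, wreathPerm 1 (Pi.single μ a) ∈ PSyl p (n + 1) := by
    intro μ a
    obtain ⟨g, hg, rfl⟩ := exists_mem_PSyl_apply_zero μ
    have hconj : wreathPerm 1 (Pi.single (g 0) a) =
        wreathPerm g 0 * wreathPerm 1 (Pi.single 0 a) * (wreathPerm g 0)⁻¹ := by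
      rw [wreathPerm_inv, wreathPerm_mul, wreathPerm_mul]
      simp only [mul_one, mul_inv_cancel, wreathPerm_inj, true_and]
      ext ν
      simp [Pi.single_apply, Equiv.eq_symm_apply, eq_comm]
    rw [hconj]
    exact mul_mem (mul_mem (wreathPerm_zero_mem_PSyl hg) (wreathPerm_one_single_zero_mem_PSyl a))
      (inv_mem (wreathPerm_zero_mem_PSyl hg))
  change Multiplicative.ofAdd f ∈ (PSyl p (n + 1)).comap translationPerm
  rw [← Finset.univ_sum_single f, ofAdd_sum]
  exact Subgroup.prod_mem _ fun μ _ => hsingle μ (f μ)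

theorem PSyl_succ : PSyl p (n + 1) = wreathSubgroup (PSyl p n) := by
  refine le_antisymm ((Subgroup.closure_le _).mpr ?_) ?_
  · rintro _ ⟨i, rfl⟩
    cases i using Fin.lastCases with
    | last => exact ⟨1, one_mem _, _, sigmaPerm_last.symm⟩
    | cast i => exact ⟨_, sigmaPerm_mem_PSyl i, 0, (sigmaPerm_castSucc i).symm⟩
  · rintro _ ⟨g, hg, f, rfl⟩
    rw [wreathPerm_eq_wreathPerm_zero_mul]
    exact mul_mem (wreathPerm_zero_mem_PSyl hg) (wreathPerm_one_mem_PSyl f)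

theorem mem_PSyl_succ {x : Perm (Fin (n + 1) → ZMod p)} :
    x ∈ PSyl p (n + 1) ↔ ∃ g ∈ PSyl p n, ∃ f, wreathPerm g f = x := by
  rw [PSyl_succ, mem_wreathSubgroup]

theorem card_PSyl : Nat.card (PSyl p n) = p ^ ∑ i ∈ Finset.range n, p ^ i := by
  induction n with
  | zero => simp
  | succ n ih =>
    rw [PSyl_succ, card_wreathSubgroup, ih, Nat.card_fun, Nat.card_fun, Finset.sum_range_succ,
      pow_add]
    simp

end Sylow

section Diagonal

def diagPerm (R : Type*) [Monoid R] (n : ℕ) : (Fin n → Rˣ) →* Perm (Fin n → R) :=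
  MulAction.toPermHom _ _

variable {R : Type*} [Monoid R] {n}

@[simp]
theorem diagPerm_apply (u : Fin n → Rˣ) (x : Fin n → R) (i : Fin n) :
    diagPerm R n u x i = u i * x i :=
  rfl

theorem diagPerm_injective : Function.Injective (diagPerm R n) := fun u v h =>
  funext fun i => Units.ext <| by simpa using congr_fun (Perm.ext_iff.mp h 1) i

@[simp]
theorem diagPerm_symm_apply (u : Fin n → Rˣ) (x : Fin n → R) (i : Fin n) :
    (diagPerm R n u).symm x i = ((u i)⁻¹ : Rˣ) * x i :=
  rfl

theorem diagPerm_snoc_apply (v : Fin n → Rˣ) (b : Rˣ) (μ : Fin n → R) (a : R) :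
    diagPerm R (n + 1) (Fin.snoc v b) (Fin.snoc μ a) = Fin.snoc (diagPerm R n v μ) (b * a) := by
  ext k
  cases k using Fin.lastCases <;> simp

end Diagonal

section DiagonalZMod

variable {p n}

theorem etaPerm_eq_diagPerm (r : (ZMod p)ˣ) (i : Fin n) :
    etaPerm p n r i = diagPerm (ZMod p) n (Pi.mulSingle i r) := by
  ext x k
  by_cases hk : k = i
  · subst hk
    simp [etaPerm]
  · simp [etaPerm, hk]

theorem closure_range_etaPerm {r : (ZMod p)ˣ} (hr : ∀ s, s ∈ Subgroup.zpowers r) :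
    Subgroup.closure (Set.range (etaPerm p n r)) = (diagPerm (ZMod p) n).range := by
  have : Set.range (etaPerm p n r) =
      diagPerm (ZMod p) n '' Set.range fun i => Pi.mulSingle i r := by
    rw [← Set.range_comp]
    exact congr_arg Set.range (funext (etaPerm_eq_diagPerm r))
  rw [this, ← MonoidHom.map_closure, Subgroup.closure_range_mulSingle_eq_top hr,
    MonoidHom.range_eq_map]

theorem diagPerm_mul_sigmaPerm_mul_inv [NeZero p] (u : Fin n → (ZMod p)ˣ) (i : Fin n) :
    diagPerm _ n u * sigmaPerm p n i * (diagPerm _ n u)⁻¹ =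
      sigmaPerm p n i ^ (u i : ZMod p).val := by
  ext x k
  simp only [Perm.coe_mul, Perm.coe_inv, Function.comp_apply, diagPerm_apply, sigmaPerm_apply,
    diagPerm_symm_apply, Units.mul_right_eq_zero, mul_ite, Units.mul_inv_cancel_left,
    sigmaPerm_pow_apply, ZMod.natCast_val, ZMod.cast_id', id_eq]
  split_ifs with h
  · obtain ⟨rfl, -⟩ := h
    rw [mul_add, Units.mul_inv_cancel_left, mul_one]
  · simp

theorem range_diagPerm_le_normalizer [NeZero p] :
    (diagPerm (ZMod p) n).range ≤ Subgroup.normalizer (PSyl p n : Set (Perm (Fin n → ZMod p))) := by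
  rw [PSyl, Subgroup.le_normalizer_closure_iff]
  rintro _ ⟨u, rfl⟩ _ ⟨i, rfl⟩
  rw [diagPerm_mul_sigmaPerm_mul_inv]
  exact pow_mem (Subgroup.subset_closure (Set.mem_range_self i)) _

variable [Fact p.Prime]

theorem nonempty_range_diagPerm_mulEquiv :
    Nonempty ((diagPerm (ZMod p) n).range ≃* (Fin n → Multiplicative (ZMod (p - 1)))) := by
  refine ⟨(MonoidHom.ofInjective diagPerm_injective).symm.trans
    (MulEquiv.piCongrRight fun _ => mulEquivOfCyclicCardEq ?_)⟩
  rw [Nat.card_eq_fintype_card, ZMod.card_units, Nat.card_congr Multiplicative.toAdd,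
    Nat.card_zmod]

theorem card_range_diagPerm : Nat.card (diagPerm (ZMod p) n).range = (p - 1) ^ n := by
  rw [← Nat.card_congr (MonoidHom.ofInjective diagPerm_injective).toEquiv, Nat.card_fun,
    Nat.card_eq_fintype_card, ZMod.card_units, Nat.card_fin]

end DiagonalZMod

section Normalizer

variable {p n} [Fact p.Prime]

theorem init_eq_init_iff {x y : Fin (n + 1) → ZMod p} :
    Fin.init x = Fin.init y ↔ ∀ g ∈ PSyl p (n + 1), g x = x → g y = y := by
  induction x using Fin.snocCases with | _ μ a => ?_
  induction y using Fin.snocCases with | _ ν b => ?_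
  simp only [Fin.init_snoc]
  constructor
  · rintro rfl g hg hgx
    obtain ⟨g, -, f, rfl⟩ := mem_PSyl_succ.mp hg
    simp_all [Fin.snoc_inj]
  · intro h
    by_contra hne
    simpa [Fin.snoc_inj] using
      h (wreathPerm 1 (Pi.single ν 1)) (wreathPerm_one_mem_PSyl _) (by simp [Ne.symm hne])

theorem init_apply_eq_init_apply_iff {τ : Perm (Fin (n + 1) → ZMod p)}
    (hτ : τ ∈ Subgroup.normalizer (PSyl p (n + 1) : Set (Perm (Fin (n + 1) → ZMod p))))
    (x y : Fin (n + 1) → ZMod p) : Fin.init (τ x) = Fin.init (τ y) ↔ Fin.init x = Fin.init y := by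
  rw [init_eq_init_iff, init_eq_init_iff, forall_fix_apply_iff_of_mem_normalizer hτ]

variable {τ : Perm (Fin (n + 1) → ZMod p)} {τ' : Perm (Fin n → ZMod p)}
  {s : (Fin n → ZMod p) → ZMod p → ZMod p}

theorem exists_add_const_of_mem_normalizer
    (hτ : τ ∈ Subgroup.normalizer (PSyl p (n + 1) : Set (Perm (Fin (n + 1) → ZMod p))))
    (hτs : ∀ μ a, τ (Fin.snoc μ a) = Fin.snoc (τ' μ) (s μ a)) {g : Perm (Fin n → ZMod p)}
    {f : (Fin n → ZMod p) → ZMod p} (hg : wreathPerm g f ∈ PSyl p (n + 1)) (μ : Fin n → ZMod p) :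
    ∃ c, ∀ a, s (g μ) (a + f μ) = s μ a + c := by
  obtain ⟨h, -, fh, hfh⟩ := mem_PSyl_succ.mp ((Subgroup.mem_normalizer_iff.mp hτ _).mp hg)
  refine ⟨fh (τ' μ), fun a => ?_⟩
  have hconj := Perm.ext_iff.mp hfh (τ (Fin.snoc μ a))
  rw [Perm.mul_apply, Perm.mul_apply, Perm.coe_inv, Equiv.symm_apply_apply] at hconj
  simp only [hτs, wreathPerm_snoc, Fin.snoc_inj] at hconj
  exact hconj.2.symm

theorem exists_slope_of_mem_normalizer
    (hτ : τ ∈ Subgroup.normalizer (PSyl p (n + 1) : Set (Perm (Fin (n + 1) → ZMod p))))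
    (hτs : ∀ μ a, τ (Fin.snoc μ a) = Fin.snoc (τ' μ) (s μ a)) :
    ∃ b : (ZMod p)ˣ, ∀ μ a, s μ a = s μ 0 + b * a := by
  -- `σ_last` translates the fibre over `0`, which makes `s 0` affine; an element of `P_(n+1)`
  -- carrying that fibre onto the fibre over `μ` shows that `s μ - s 0` is constant.
  obtain ⟨c, hc⟩ := exists_add_const_of_mem_normalizer hτ hτs
    (sigmaPerm_last (n := n) ▸ sigmaPerm_mem_PSyl _) 0
  have hs0 : ∀ a, s 0 a = s 0 0 + c * a :=
    ZMod.apply_eq_add_mul_of_apply_add_one (by simpa using hc)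
  have hc0 : c ≠ 0 := by
    intro hc0
    have : τ (Fin.snoc 0 1) = τ (Fin.snoc 0 0) := by
      rw [hτs, hτs, hs0 1, hs0 0, hc0]
      simp
    simpa [Fin.snoc_inj] using τ.injective this
  refine ⟨Units.mk0 c hc0, fun μ a => ?_⟩
  obtain ⟨g, hg, rfl⟩ := exists_mem_PSyl_apply_zero μ
  obtain ⟨d, hd⟩ := exists_add_const_of_mem_normalizer hτ hτs (wreathPerm_zero_mem_PSyl hg) 0
  simp only [Pi.zero_apply, add_zero] at hd
  rw [hd, hd, hs0, hs0, Units.val_mk0]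
  ring

theorem mem_normalizer_of_apply_snoc_eq
    (hτ : τ ∈ Subgroup.normalizer (PSyl p (n + 1) : Set (Perm (Fin (n + 1) → ZMod p))))
    (hτs : ∀ μ a, τ (Fin.snoc μ a) = Fin.snoc (τ' μ) (s μ a)) :
    τ' ∈ Subgroup.normalizer (PSyl p n : Set (Perm (Fin n → ZMod p))) := by
  refine Subgroup.mem_normalizer_fintype fun h hh => ?_
  obtain ⟨k, hk, fk, hkf⟩ := mem_PSyl_succ.mp
    ((Subgroup.mem_normalizer_iff.mp hτ _).mp (wreathPerm_zero_mem_PSyl hh))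
  have hkh : k = τ' * h * τ'⁻¹ := Equiv.ext fun ν => by
    obtain ⟨μ, rfl⟩ := τ'.surjective ν
    have hconj := Perm.ext_iff.mp hkf (τ (Fin.snoc μ 0))
    rw [Perm.mul_apply, Perm.mul_apply, Perm.coe_inv, Equiv.symm_apply_apply] at hconj
    simp only [hτs, wreathPerm_snoc, Pi.zero_apply, add_zero, Fin.snoc_inj] at hconj
    simp [hconj.1]
  exact hkh ▸ hk

end Normalizer

section Hall

variable {p n} [Fact p.Prime]

theorem exists_mem_PSyl_mul_diagPerm {τ : Perm (Fin n → ZMod p)}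
    (hτ : τ ∈ Subgroup.normalizer (PSyl p n : Set (Perm (Fin n → ZMod p)))) :
    ∃ a ∈ PSyl p n, ∃ v, a * diagPerm (ZMod p) n v = τ := by
  induction n with
  | zero => exact ⟨1, one_mem _, 1, Subsingleton.elim _ _⟩
  | succ n ih =>
    obtain ⟨τ', s, hτs⟩ := exists_perm_snoc_of_init_apply_iff (init_apply_eq_init_apply_iff hτ)
    obtain ⟨b, hb⟩ := exists_slope_of_mem_normalizer hτ hτs
    obtain ⟨a, ha, v, rfl⟩ := ih (mem_normalizer_of_apply_snoc_eq hτ hτs)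
    refine ⟨wreathPerm a fun ν => s ((diagPerm _ n v).symm ν) 0, mem_PSyl_succ.mpr ⟨a, ha, _, rfl⟩,
      Fin.snoc v b, Perm.ext_snoc fun μ x => ?_⟩
    rw [Perm.mul_apply, diagPerm_snoc_apply, wreathPerm_snoc, hτs, hb μ x]
    simp [add_comm]

theorem isComplement'_PSyl_range_diagPerm :
    ((PSyl p n).subgroupOf
        (Subgroup.normalizer (PSyl p n : Set (Perm (Fin n → ZMod p))))).IsComplement'
      ((diagPerm (ZMod p) n).range.subgroupOf
        (Subgroup.normalizer (PSyl p n : Set (Perm (Fin n → ZMod p))))) := by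
  refine Subgroup.isComplement'_of_disjoint_and_mul_eq_univ
    (Subgroup.disjoint_of_coprime_natCard ?_) (Set.eq_univ_of_forall fun τ => ?_)
  · rw [Nat.card_congr (Subgroup.subgroupOfEquivOfLe Subgroup.le_normalizer).toEquiv,
      Nat.card_congr (Subgroup.subgroupOfEquivOfLe range_diagPerm_le_normalizer).toEquiv,
      card_PSyl, card_range_diagPerm]
    exact Nat.Coprime.pow _ _ ((Nat.coprime_self_sub_right (Fact.out : p.Prime).one_le).mpr
      (Nat.coprime_one_right p))
  · obtain ⟨a, ha, v, hav⟩ := exists_mem_PSyl_mul_diagPerm τ.2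
    exact ⟨⟨a, Subgroup.le_normalizer ha⟩, ha, ⟨_, range_diagPerm_le_normalizer ⟨v, rfl⟩⟩,
      ⟨v, rfl⟩, Subtype.ext hav⟩

theorem index_range_diagPerm_subgroupOf_normalizer :
    ((diagPerm (ZMod p) n).range.subgroupOf
        (Subgroup.normalizer (PSyl p n : Set (Perm (Fin n → ZMod p))))).index =
      p ^ ∑ i ∈ Finset.range n, p ^ i := by
  rw [isComplement'_PSyl_range_diagPerm.index_eq_card,
    Nat.card_congr (Subgroup.subgroupOfEquivOfLe Subgroup.le_normalizer).toEquiv, card_PSyl]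

end Hall

theorem etaSubgroup_hall (hp : p.Prime)
    (r : (ZMod p)ˣ) (hr : ∀ s : (ZMod p)ˣ, s ∈ Subgroup.zpowers r) :
    Nonempty (↥(Subgroup.closure (Set.range (etaPerm p n r)))
        ≃* (Fin n → Multiplicative (ZMod (p - 1)))) ∧
    Subgroup.closure (Set.range (etaPerm p n r)) ≤ Subgroup.normalizer (PSyl p n : Set (Equiv.Perm (Fin n → ZMod p))) ∧
    (Nat.card ↥(Subgroup.closure (Set.range (etaPerm p n r)))).Coprime p ∧
    (∃ m : ℕ, ((Subgroup.closure (Set.range (etaPerm p n r))).subgroupOf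
        (Subgroup.normalizer (PSyl p n : Set (Equiv.Perm (Fin n → ZMod p))))).index = p ^ m) := by
  have : Fact p.Prime := ⟨hp⟩
  rw [closure_range_etaPerm hr, card_range_diagPerm]
  refine ⟨nonempty_range_diagPerm_mulEquiv, range_diagPerm_le_normalizer,
    Nat.Coprime.pow_left n ?_, _, index_range_diagPerm_subgroupOf_normalizer⟩
  exact (Nat.coprime_self_sub_left hp.one_le).mpr (Nat.coprime_one_left p)
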